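/- arXiv:2605.11351 — 3 statements merged into one kernel-verified Lean document; each statement's English description precedes it below -/
import Mathlib

section
/- For every natural number n ≥ 2, the sequence a(n) = (n+3)!/4 · (2·H_{n+3} − 3), where H_m denotes the m-th harmonic number, satisfies the recurrence a(n) − (2n+5)·a(n−1) + (n+2)²·a(n−2) = 0. -/
def H (m : ℕ) : ℚ := ∑ k ∈ Finset.range m, (1 : ℚ) / (k + 1)

def a (n : ℕ) : ℚ := (Nat.factorial (n + 3) : ℚ) * (2 * H (n + 3) - 3) / 4

theorem mathar_recurrence (n : ℕ) (hn : 2 ≤ n) :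
    a n - (2 * (n : ℚ) + 5) * a (n - 1) + ((n : ℚ) + 2) ^ 2 * a (n - 2) = 0 := by
  obtain ⟨m, rfl⟩ := Nat.exists_eq_add_of_le hn
  have h1 : 2 + m - 1 = m + 1 := by omega
  have h2 : 2 + m - 2 = m := by omega
  rw [h1, h2]
  have hm4 : ((m : ℚ) + 4) ≠ 0 := by positivity
  have hm5 : ((m : ℚ) + 5) ≠ 0 := by positivity
  simp only [a, H, show 2 + m + 3 = (m + 3) + 1 + 1 from by omega,
    show m + 1 + 3 = (m + 3) + 1 from by omega, Finset.sum_range_succ,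
    Nat.factorial_succ]
  push_cast
  field_simp
  ring
end

section
/- Define a : ℕ → ℚ recursively by a(0) = 1, a(1) = 7, and a(n) = (2n+5)·a(n−1) − (n+2)²·a(n−2) for n ≥ 2. Then for all n, a(n) = (n+3)!·(2H_{n+3} − 3)/4, where H_m is the m-th harmonic number. -/
def s : ℕ → ℚ
  | 0 => 1
  | 1 => 7
  | (n + 2) => (2 * ((n : ℚ) + 2) + 5) * s (n + 1) - (((n : ℚ) + 2) + 2) ^ 2 * s n

lemma H_succ (m : ℕ) : H (m + 1) = H m + 1 / ((m : ℚ) + 1) := by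
  simp [H, Finset.sum_range_succ]

theorem recurrence_unique_solution (n : ℕ) :
    s n = (Nat.factorial (n + 3) : ℚ) * (2 * H (n + 3) - 3) / 4 := by
  induction n using Nat.twoStepInduction with
  | zero => norm_num [s, H, Finset.sum_range_succ, Nat.factorial]
  | one => norm_num [s, H, Finset.sum_range_succ, Nat.factorial]
  | more n ih1 ih2 =>
    show s (n + 2) = _
    have h5 : ((n:ℕ) + 2 + 3) = n + 3 + 1 + 1 := by ring
    have h4 : ((n:ℕ) + 1 + 3) = n + 3 + 1 := by ring
    rw [h4] at ih2
    have hf4 : ((Nat.factorial (n + 3 + 1)) : ℚ) = ((n:ℚ) + 4) * (Nat.factorial (n + 3) : ℚ) := by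
      rw [Nat.factorial_succ]; push_cast; ring
    have hf5 : ((Nat.factorial (n + 3 + 1 + 1)) : ℚ) = ((n:ℚ) + 5) * ((n:ℚ) + 4) * (Nat.factorial (n + 3) : ℚ) := by
      push_cast [Nat.factorial_succ]; ring
    have hH4 : H (n + 3 + 1) = H (n + 3) + 1 / ((n:ℚ) + 4) := by
      rw [H_succ]; push_cast; ring
    have hH5 : H (n + 3 + 1 + 1) = H (n + 3) + 1 / ((n:ℚ) + 4) + 1 / ((n:ℚ) + 5) := by
      rw [H_succ, hH4]; push_cast; ring
    rw [s, ih1, ih2, h5, hf4, hf5, hH4, hH5]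
    have hn4 : ((n:ℚ) + 4) ≠ 0 := by positivity
    have hn5 : ((n:ℚ) + 5) ≠ 0 := by positivity
    field_simp
    ring
end

section
/- Define b : ℕ → ℚ by b(n) = (1/4)·(n+1)·(n+2)·(n+3)·(2·H_{n+3} − 3). Then for all n ≥ 2, n!·b(n) − (2n+5)·(n−1)!·b(n−1) + (n+2)²·(n−2)!·b(n−2) = 0; equivalently, the sequence a(n) := n!·b(n) satisfies Mathar's recurrence. -/
def b (n : ℕ) : ℚ :=
  (1 / 4 : ℚ) * ((n : ℚ) + 1) * ((n : ℚ) + 2) * ((n : ℚ) + 3) * (2 * H (n + 3) - 3)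

theorem egf_coeff_recurrence (n : ℕ) (hn : 2 ≤ n) :
    (Nat.factorial n : ℚ) * b n
      - (2 * (n : ℚ) + 5) * (Nat.factorial (n - 1) : ℚ) * b (n - 1)
      + ((n : ℚ) + 2) ^ 2 * (Nat.factorial (n - 2) : ℚ) * b (n - 2) = 0 := by
  obtain ⟨m, rfl⟩ : ∃ m, n = m + 2 := ⟨n - 2, by omega⟩
  simp only [show m + 2 - 1 = m + 1 from rfl, show m + 2 - 2 = m from rfl, b,
    Nat.factorial_succ, show m + 2 + 3 = (m + 3) + 2 from rfl,
    show m + 1 + 3 = (m + 3) + 1 from rfl, H_succ]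
  push_cast
  have h1 : (m : ℚ) + 3 + 1 ≠ 0 := by positivity
  have h2 : (m : ℚ) + 3 + 1 + 1 ≠ 0 := by positivity
  field_simp
  ring
end
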